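/- Let c ∈ ℂ with Re(c) > 0 and Im(c) > 0, and write θ := arg(c) ∈ (0, π/2). Then for every z ∈ ℂ, inf{‖H_c f − z f‖ : f ∈ 𝒮(ℝ), ‖f‖ = 1} = inf{‖H_c f − e^{iθ} \overline{z} f‖ : f ∈ 𝒮(ℝ), ‖f‖ = 1}; equivalently, the resolvent norm of H_c (and hence each ε-pseudospectrum of H_c) is symmetric with respect to reflection in the axis c^{1/2}·ℝ. -/

import Mathlib

open MeasureTheory Complex

/-- The action `f ↦ H_c f - z f` of the shifted complex harmonic oscillator. -/
noncomputable def oscShifted (c z : ℂ) (f : ℝ → ℂ) : ℝ → ℂ :=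
  fun x => -(deriv (deriv f) x) + c * (x : ℂ) ^ 2 * f x - z * f x

/-!
Write `c = ρ μ` with `ρ = ‖c‖` and `μ = e^{iθ}`, and consider the operators
`-α ∂² + β x² - z` with arbitrary complex coefficients. Complex conjugation conjugates all three
coefficients, the Fourier transform turns `(α, β)` into `(β / 4π², 4π² α)`, and the dilation
`f ↦ √a f(a ·)` turns `(α, β)` into `(α a², β / a²)`. For `a² = ρ / 4π²` the composite
`U f = √a (𝓕 f̄)(a ·)`, an isometry of the Schwartz space, satisfies
`(H_c - μ z̄) U = μ U (H_c - z)`.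
Hence every residual norm `‖(H_c - z) f‖` is also one for `μ z̄`, and as the reflection is an
involution the two sets coincide.
-/

open FourierTransform
open scoped Real SchwartzMap

/-- The reflection of `z` in the axis `c^{1/2} ℝ`. -/
noncomputable def axisReflect (c z : ℂ) : ℂ := exp (c.arg * I) * starRingEnd ℂ z

lemma exp_arg_mul_I_mul_conj (c : ℂ) : exp (c.arg * I) * starRingEnd ℂ (exp (c.arg * I)) = 1 := by
  rw [mul_conj, normSq_eq_norm_sq, norm_exp_ofReal_mul_I, one_pow, ofReal_one]

lemma axisReflect_axisReflect (c z : ℂ) : axisReflect c (axisReflect c z) = z := by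
  rw [axisReflect, axisReflect, map_mul, conj_conj, ← mul_assoc, exp_arg_mul_I_mul_conj, one_mul]

namespace SchwartzMap

noncomputable def conj (f : 𝓢(ℝ, ℂ)) : 𝓢(ℝ, ℂ) :=
  postcompCLM (𝕜 := ℝ) conjCLE.toContinuousLinearMap f

@[simp] lemma conj_apply (f : 𝓢(ℝ, ℂ)) (x : ℝ) : f.conj x = starRingEnd ℂ (f x) := rfl

lemma integral_norm_sq_conj (f : 𝓢(ℝ, ℂ)) : ∫ x, ‖f.conj x‖ ^ 2 = ∫ x, ‖f x‖ ^ 2 := by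
  simp

noncomputable def dilate (a : ℝˣ) : 𝓢(ℝ, ℂ) →L[ℂ] 𝓢(ℝ, ℂ) :=
  (√|(a : ℝ)| : ℂ) • compCLMOfContinuousLinearEquiv ℂ (ContinuousLinearEquiv.unitsEquivAut ℝ a)

lemma dilate_apply (a : ℝˣ) (f : 𝓢(ℝ, ℂ)) (x : ℝ) :
    dilate a f x = √|(a : ℝ)| * f (x * a) := rfl

lemma integral_norm_sq_dilate (a : ℝˣ) (f : 𝓢(ℝ, ℂ)) :
    ∫ x, ‖dilate a f x‖ ^ 2 = ∫ x, ‖f x‖ ^ 2 := by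
  have h (x : ℝ) : ‖dilate a f x‖ ^ 2 = |(a : ℝ)| * ‖f (x * a)‖ ^ 2 := by
    rw [dilate_apply, norm_mul, mul_pow, norm_real, Real.norm_of_nonneg (Real.sqrt_nonneg _),
      Real.sq_sqrt (abs_nonneg _)]
  simp_rw [h]
  rw [integral_const_mul, Measure.integral_comp_mul_right (fun y => ‖f y‖ ^ 2), smul_eq_mul,
    ← mul_assoc, abs_inv, mul_inv_cancel₀ (by simp), one_mul]

noncomputable def mulSq : 𝓢(ℝ, ℂ) →L[ℂ] 𝓢(ℝ, ℂ) := smulLeftCLM ℂ (fun x : ℝ => (x : ℂ) ^ 2)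

lemma mulSq_apply (f : 𝓢(ℝ, ℂ)) (x : ℝ) : mulSq f x = (x : ℂ) ^ 2 * f x :=
  smulLeftCLM_apply_apply (by fun_prop) f x

lemma fourier_derivCLM_derivCLM (f : 𝓢(ℝ, ℂ)) :
    𝓕 (derivCLM ℂ ℂ (derivCLM ℂ ℂ f)) = -(4 * π ^ 2 : ℂ) • mulSq (𝓕 f) := by
  ext ξ
  have h (g : 𝓢(ℝ, ℂ)) : 𝓕 (derivCLM ℂ ℂ g) ξ = 2 * π * I * ξ * 𝓕 g ξ :=
    congrFun (Real.fourier_deriv g.integrable g.differentiable (derivCLM ℂ ℂ g).integrable) ξ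
  rw [h, h, smul_apply, mulSq_apply, smul_eq_mul]
  linear_combination (4 * π ^ 2 * ξ ^ 2 * 𝓕 f ξ) * I_sq

lemma derivCLM_derivCLM_fourier (f : 𝓢(ℝ, ℂ)) :
    derivCLM ℂ ℂ (derivCLM ℂ ℂ (𝓕 f)) = -(4 * π ^ 2 : ℂ) • 𝓕 (mulSq f) := by
  have hpow (n : ℕ) : Integrable (fun x : ℝ => x ^ n • f x) := by
    simpa [smulLeftCLM_apply (show Function.HasTemperateGrowth (fun x : ℝ => x ^ n) by fun_prop)]
      using (smulLeftCLM ℂ (fun x : ℝ => x ^ n) f).integrable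
  have h := Real.iteratedDeriv_fourier (N := 2) (n := 2) (f := ⇑f) (fun n _ => hpow n) le_rfl
  have hsq : (fun x : ℝ => (-2 * π * I * x) ^ 2 • f x) = ⇑(-(4 * π ^ 2 : ℂ) • mulSq f) := by
    ext x
    rw [smul_apply, mulSq_apply, smul_eq_mul, smul_eq_mul]
    linear_combination (4 * π ^ 2 * x ^ 2 * f x) * I_sq
  rw [hsq, iteratedDeriv_succ, iteratedDeriv_one] at h
  ext ξ
  rw [← FourierTransform.fourier_smul]
  exact congrFun h ξ

noncomputable def osc (α β z : ℂ) (f : 𝓢(ℝ, ℂ)) : 𝓢(ℝ, ℂ) :=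
  -(α • derivCLM ℂ ℂ (derivCLM ℂ ℂ f)) + β • mulSq f - z • f

lemma osc_apply (α β z : ℂ) (f : 𝓢(ℝ, ℂ)) (x : ℝ) :
    osc α β z f x = -(α * deriv (deriv f) x) + β * (x : ℂ) ^ 2 * f x - z * f x := by
  have hD : ⇑(derivCLM ℂ ℂ f) = deriv f := rfl
  simp [osc, mulSq_apply, hD, mul_assoc]

lemma oscShifted_eq_osc (c z : ℂ) (f : 𝓢(ℝ, ℂ)) : oscShifted c z f = osc 1 c z f := by
  ext x
  simp [oscShifted, osc_apply]

lemma osc_mul_coeffs (μ α β z : ℂ) (f : 𝓢(ℝ, ℂ)) :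
    osc (μ * α) (μ * β) (μ * z) f = μ • osc α β z f := by
  simp only [osc, smul_add, smul_sub, smul_neg, smul_smul]

lemma osc_conj (α β z : ℂ) (f : 𝓢(ℝ, ℂ)) :
    osc α β z f.conj = (osc (starRingEnd ℂ α) (starRingEnd ℂ β) (starRingEnd ℂ z) f).conj := by
  have hf : deriv (deriv ⇑f.conj) = fun x => star (deriv (deriv f) x) := by
    change deriv (deriv fun x => star (f x)) = _
    simp only [deriv.star']
  ext x
  simp [osc_apply, hf]

lemma osc_dilate (α β z : ℂ) (a : ℝˣ) (f : 𝓢(ℝ, ℂ)) :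
    osc α β z (dilate a f) = dilate a (osc (α * (a : ℝ) ^ 2) (β / (a : ℝ) ^ 2) z f) := by
  have hf : ⇑(dilate a f) = fun x => (√|(a : ℝ)| : ℂ) * f ((a : ℝ) * x) := by
    ext x; rw [dilate_apply, mul_comm x]
  have ha : ((a : ℝ) : ℂ) ≠ 0 := by simp
  ext x
  simp only [osc_apply, hf, dilate_apply, deriv_const_mul_field', deriv_comp_mul_left,
    Complex.real_smul]
  field_simp
  push_cast
  ring

lemma fourier_osc (α β z : ℂ) (f : 𝓢(ℝ, ℂ)) :
    𝓕 (osc α β z f) = osc (β / (4 * π ^ 2)) (4 * π ^ 2 * α) z (𝓕 f) := by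
  have hπ : (4 * π ^ 2 : ℂ) ≠ 0 := by norm_num [Real.pi_ne_zero]
  simp only [osc, sub_eq_add_neg, FourierTransform.fourier_add, FourierTransform.fourier_neg,
    FourierTransform.fourier_smul, fourier_derivCLM_derivCLM, derivCLM_derivCLM_fourier, smul_smul]
  field_simp
  module

lemma integral_norm_sq_dilate_fourier_conj (a : ℝˣ) (f : 𝓢(ℝ, ℂ)) :
    ∫ x, ‖dilate a (𝓕 f.conj) x‖ ^ 2 = ∫ x, ‖f x‖ ^ 2 := by
  rw [integral_norm_sq_dilate, integral_norm_sq_fourier, integral_norm_sq_conj]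

lemma osc_axisReflect_dilate_fourier_conj (c z : ℂ) (a : ℝˣ) (ha : 4 * π ^ 2 * (a : ℝ) ^ 2 = ‖c‖)
    (f : 𝓢(ℝ, ℂ)) :
    osc 1 c (axisReflect c z) (dilate a (𝓕 f.conj)) =
      exp (c.arg * I) • dilate a (𝓕 (osc 1 c z f).conj) := by
  set μ := exp (c.arg * I)
  have hμ := exp_arg_mul_I_mul_conj c
  have hc : c = ‖c‖ * μ := (norm_mul_exp_arg_mul_I c).symm
  have ha' : (4 * π ^ 2 * (a : ℝ) ^ 2 : ℂ) = ‖c‖ := by exact_mod_cast ha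
  have hα : 1 * ((a : ℝ) : ℂ) ^ 2 = μ * (starRingEnd ℂ c / (4 * π ^ 2)) := by
    rw [hc, map_mul, conj_ofReal]
    field_simp
    linear_combination ha' - ‖c‖ * hμ
  have hβ : c / ((a : ℝ) : ℂ) ^ 2 = μ * (4 * π ^ 2 * 1) := by
    rw [hc, ← ha']
    field_simp
  rw [osc_dilate, hα, hβ, axisReflect, osc_mul_coeffs, map_smul, ← fourier_osc, osc_conj]
  simp

end SchwartzMap

open SchwartzMap

noncomputable def residualNorms (c z : ℂ) : Set ℝ :=
  {r | ∃ f : 𝓢(ℝ, ℂ), ∫ x, ‖f x‖ ^ 2 = 1 ∧ r = √(∫ x, ‖oscShifted c z f x‖ ^ 2)}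

lemma exists_units_four_pi_sq_mul_sq_eq_norm (c : ℂ) (hc : c ≠ 0) :
    ∃ a : ℝˣ, 4 * π ^ 2 * (a : ℝ) ^ 2 = ‖c‖ := by
  refine ⟨Units.mk0 (√‖c‖ / (2 * π)) (by positivity), ?_⟩
  rw [Units.val_mk0, div_pow, Real.sq_sqrt (norm_nonneg c)]
  field_simp
  ring

lemma residualNorms_subset (c : ℂ) (hc : c ≠ 0) (z : ℂ) :
    residualNorms c z ⊆ residualNorms c (axisReflect c z) := by
  obtain ⟨a, ha⟩ := exists_units_four_pi_sq_mul_sq_eq_norm c hc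
  rintro r ⟨f, hf, rfl⟩
  refine ⟨dilate a (𝓕 f.conj), by rw [integral_norm_sq_dilate_fourier_conj, hf], ?_⟩
  simp only [oscShifted_eq_osc, osc_axisReflect_dilate_fourier_conj c z a ha, smul_apply,
    smul_eq_mul, norm_mul, norm_exp_ofReal_mul_I, one_mul, integral_norm_sq_dilate_fourier_conj]

theorem resolventNorm_symmetric (c : ℂ) (hre : 0 < c.re) (z : ℂ) :
    sInf {r : ℝ | ∃ f : SchwartzMap ℝ ℂ, (∫ x : ℝ, ‖f x‖ ^ 2 : ℝ) = 1 ∧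
        r = Real.sqrt (∫ x : ℝ, ‖oscShifted c z (f : ℝ → ℂ) x‖ ^ 2)} =
    sInf {r : ℝ | ∃ f : SchwartzMap ℝ ℂ, (∫ x : ℝ, ‖f x‖ ^ 2 : ℝ) = 1 ∧
        r = Real.sqrt (∫ x : ℝ,
          ‖oscShifted c (Complex.exp ((c.arg : ℂ) * Complex.I) * (starRingEnd ℂ z))
            (f : ℝ → ℂ) x‖ ^ 2)} := by
  have hc : c ≠ 0 := by rintro rfl; simp at hre
  change sInf (residualNorms c z) = sInf (residualNorms c (axisReflect c z))
  have hback := residualNorms_subset c hc (axisReflect c z)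
  rw [axisReflect_axisReflect] at hback
  rw [(residualNorms_subset c hc z).antisymm hback]
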